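/- Let α ∈ (0,1) be irrational and R the rotation of ℝ² through 2πα. Then the sequence of measures ω_N = (1/N) Σ_{n=1}^N δ_{Rⁿℤ²} converges in the vague topology to ω = Σ_{r ∈ D} η(r) μ_r, where D is the set of radii of non-empty shells of ℤ², η(r) is the number of points of ℤ² of norm r, and μ_r is the uniform probability measure on the circle of radius r (with μ_0 = δ_0). -/

import Mathlib

open MeasureTheory Real Filter
open scoped ENNReal

/-- The uniform probability measure on the circle of radius `r` about the origin
of the plane (identified with `ℂ`); for `r = 0` this is the Dirac measure at `0`. -/
noncomputable def circleUniform (r : ℝ) : Measure ℂ :=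
  Measure.map (fun θ : ℝ => (r : ℂ) * Complex.exp (θ * Complex.I))
    ((ENNReal.ofReal (2 * π))⁻¹ • volume.restrict (Set.Ioc (0 : ℝ) (2 * π)))

/-- The Dirac comb of the rotated square lattice `u·ℤ²` (for `|u| = 1`). -/
noncomputable def rotLatticeComb (u : ℂ) : Measure ℂ :=
  Measure.sum fun p : ℤ × ℤ => Measure.dirac (u * ((p.1 : ℂ) + (p.2 : ℂ) * Complex.I))

/-- The set of radii of non-empty shells of `ℤ²`. -/
def shellRadii : Set ℝ := {r : ℝ | 0 ≤ r ∧ ∃ m n : ℤ, r ^ 2 = (m : ℝ) ^ 2 + (n : ℝ) ^ 2}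

/-- The shelling number of `ℤ²`: the number of lattice points at distance `r`
from the origin. -/
noncomputable def shellCount (r : ℝ) : ℕ :=
  Set.ncard {p : ℤ × ℤ | ‖(p.1 : ℂ) + (p.2 : ℂ) * Complex.I‖ = r}

open scoped Topology

/-!
Tested against `f` supported in the ball of radius `ρ`, the comb `δ_{Rⁿℤ²}` only sees the
finitely many lattice points `p` with `|p| < ρ`, so `ω_N(f) = ∑_{|p|<ρ} (1/N) ∑ₙ f(Rⁿp)`.
On the other side `ω = ∑_{p ∈ ℤ²} μ_{|p|}`, each shell of radius `r` contributing `η(r)`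
copies of `μ_r`, so `ω(f) = ∑_{|p|<ρ} μ_{|p|}(f)`. It remains to see that each orbit average
`(1/N) ∑ₙ f(Rⁿp)` tends to `μ_{|p|}(f)`: this is Weyl's equidistribution theorem for the
rotation by `α` on the circle of radius `|p|`. For a character `e_k`, `k ≠ 0`, the rotation
multiplies `e_k` by `e_k(α) ≠ 1` while changing its averages only by `O(1/N)`, so they tend to
`0`; as the averages are `1`-Lipschitz in the sup norm, convergence extends from
trigonometric polynomials to all continuous functions.
-/

section BirkhoffAverageAlgebra

variable {α R M : Type*} [Semifield R] [AddCommMonoid M] [Module R M]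

theorem birkhoffAverage_const_smul (f : α → α) (g : α → M) (c : R) (n : ℕ) (x : α) :
    birkhoffAverage R f (c • g) n x = c • birkhoffAverage R f g n x := by
  simp only [birkhoffAverage, birkhoffSum, Pi.smul_apply, ← Finset.smul_sum, smul_comm c]

theorem birkhoffAverage_apply_eq_smul {f : α → α} {g : α → M} {c : R} (hgf : g ∘ f = c • g)
    (n : ℕ) (x : α) : birkhoffAverage R f g n (f x) = c • birkhoffAverage R f g n x := by
  simp only [birkhoffAverage, birkhoffSum, Finset.smul_sum, smul_comm c]
  congr 2 with k
  rw [← Function.iterate_succ_apply, Function.iterate_succ_apply', ← Function.comp_apply (f := g),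
    hgf, Pi.smul_apply]

end BirkhoffAverageAlgebra

section BirkhoffAverage

variable {α 𝕜 E : Type*} [RCLike 𝕜] [NormedAddCommGroup E] [NormedSpace 𝕜 E]

theorem norm_birkhoffAverage_le (f : α → α) {g : α → E} {C : ℝ} (hg : ∀ x, ‖g x‖ ≤ C)
    (n : ℕ) (x : α) : ‖birkhoffAverage 𝕜 f g n x‖ ≤ C := by
  rcases eq_or_ne n 0 with rfl | hn
  · simpa using (norm_nonneg _).trans (hg x)
  have hsum : ‖birkhoffSum f g n x‖ ≤ n * C :=
    (norm_sum_le _ _).trans <| by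
      simpa using Finset.sum_le_sum fun k (_ : k ∈ Finset.range n) => hg (f^[k] x)
  calc ‖birkhoffAverage 𝕜 f g n x‖ = (n : ℝ)⁻¹ * ‖birkhoffSum f g n x‖ := by
        simp [birkhoffAverage, norm_smul]
    _ ≤ (n : ℝ)⁻¹ * (n * C) := by gcongr
    _ = C := by field_simp

theorem tendsto_birkhoffAverage_zero_of_comp_eq_smul {f : α → α} {g : α → E} {c : 𝕜}
    (hc : c ≠ 1) (hgf : g ∘ f = c • g) (hg : Bornology.IsBounded (Set.range g)) (x : α) :
    Tendsto (birkhoffAverage 𝕜 f g · x) atTop (𝓝 0) := by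
  have hsub := (tendsto_birkhoffAverage_apply_sub_birkhoffAverage' 𝕜 hg f x).const_smul (c - 1)⁻¹
  have hc' : c - 1 ≠ 0 := sub_ne_zero.2 hc
  refine (hsub.congr fun n => ?_).trans (by rw [smul_zero])
  rw [birkhoffAverage_apply_eq_smul hgf]
  match_scalars
  field_simp

theorem ContinuousMap.lipschitzWith_birkhoffAverage {X : Type*} [TopologicalSpace X]
    [CompactSpace X] (f : X → X) (n : ℕ) (x : X) :
    LipschitzWith 1 (fun g : C(X, E) => birkhoffAverage 𝕜 f g n x) := by
  refine LipschitzWith.of_dist_le_mul fun g h => ?_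
  rw [NNReal.coe_one, one_mul, dist_eq_norm, dist_eq_norm, ← Pi.sub_apply (birkhoffAverage 𝕜 f g n),
    ← Pi.sub_apply (birkhoffAverage 𝕜 f g), ← birkhoffAverage_sub, ← ContinuousMap.coe_sub]
  exact norm_birkhoffAverage_le f (g - h).norm_coe_le_norm n x

end BirkhoffAverage

section ContinuousMap

variable {X E : Type*} [TopologicalSpace X] [CompactSpace X] [MeasurableSpace X]
  [OpensMeasurableSpace X] [NormedAddCommGroup E] [NormedSpace ℝ E] [SecondCountableTopology E]
  [MeasurableSpace E] [BorelSpace E]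

theorem ContinuousMap.lipschitzWith_integral (μ : Measure X) [IsProbabilityMeasure μ] :
    LipschitzWith 1 (fun g : C(X, E) => ∫ x, g x ∂μ) := by
  refine LipschitzWith.of_dist_le_mul fun g h => ?_
  have hint (g : C(X, E)) : Integrable g μ := (BoundedContinuousFunction.mkOfCompact g).integrable μ
  rw [NNReal.coe_one, one_mul, dist_eq_norm, dist_eq_norm, ← integral_sub (hint g) (hint h)]
  simpa only [BoundedContinuousFunction.mkOfCompact_apply, ContinuousMap.sub_apply,
    BoundedContinuousFunction.norm_mkOfCompact] using
    (BoundedContinuousFunction.mkOfCompact (g - h)).norm_integral_le_norm μ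

end ContinuousMap

namespace AddCircle

variable {T : ℝ} [hT : Fact (0 < T)]

theorem integral_fourier_haarAddCircle (k : ℤ) :
    ∫ t, fourier k t ∂haarAddCircle (T := T) = if k = 0 then 1 else 0 := by
  have := congrFun (fourierCoeff_fourier (T := T) k) 0
  simp only [fourierCoeff, neg_zero, fourier_zero, one_smul] at this
  rw [this, Pi.single_apply]
  simp only [eq_comm]

theorem fourier_ne_one_of_not_isOfFinAddOrder {a : AddCircle T} (ha : ¬IsOfFinAddOrder a)
    {k : ℤ} (hk : k ≠ 0) : fourier k a ≠ (1 : ℂ) := by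
  intro h
  refine ha (isOfFinAddOrder_iff_zsmul_eq_zero.2 ⟨k, hk, injective_toCircle hT.out.ne' ?_⟩)
  ext1
  simpa [fourier_apply] using h

theorem tendsto_birkhoffAverage_fourier {a : AddCircle T} (ha : ¬IsOfFinAddOrder a) (k : ℤ)
    (x : AddCircle T) :
    Tendsto (birkhoffAverage ℂ (· + a) (fourier k) · x) atTop
      (𝓝 (∫ t, fourier k t ∂haarAddCircle (T := T))) := by
  rw [integral_fourier_haarAddCircle]
  split_ifs with hk
  · subst hk
    refine tendsto_const_nhds.congr' <| (eventually_ne_atTop 0).mono fun n hn => ?_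
    have hinv : ⇑(fourier 0 : C(AddCircle T, ℂ)) ∘ (· + a) = fourier 0 := by
      ext; simp
    simp only [birkhoffAverage_of_comp_eq ℂ hinv (Nat.cast_ne_zero.2 hn), fourier_zero]
  · refine tendsto_birkhoffAverage_zero_of_comp_eq_smul
      (fourier_ne_one_of_not_isOfFinAddOrder ha hk) ?_
      (isCompact_range (map_continuous _)).isBounded x
    ext y
    simp [fourier_apply, smul_add, toCircle_add, mul_comm]

theorem tendsto_birkhoffAverage_add {a : AddCircle T} (ha : ¬IsOfFinAddOrder a)
    (g : C(AddCircle T, ℂ)) (x : AddCircle T) :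
    Tendsto (birkhoffAverage ℂ (· + a) g · x) atTop (𝓝 (∫ t, g t ∂haarAddCircle (T := T))) := by
  let V := {g : C(AddCircle T, ℂ) |
    Tendsto (birkhoffAverage ℂ (· + a) g · x) atTop (𝓝 (∫ t, g t ∂haarAddCircle (T := T)))}
  have hint (g : C(AddCircle T, ℂ)) : Integrable g (haarAddCircle (T := T)) :=
    (BoundedContinuousFunction.mkOfCompact g).integrable _
  have hclosed : IsClosed V :=
    (LipschitzWith.uniformEquicontinuous _ 1 fun n =>
      ContinuousMap.lipschitzWith_birkhoffAverage _ n x).equicontinuous.isClosed_setOfPred_tendsto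
      (ContinuousMap.lipschitzWith_integral _).continuous
  have hspan : (Submodule.span ℂ (Set.range (fourier (T := T))) : Set C(AddCircle T, ℂ)) ⊆ V := by
    intro g hg
    induction hg using Submodule.span_induction with
    | mem _ h => obtain ⟨k, rfl⟩ := h; exact tendsto_birkhoffAverage_fourier ha k x
    | zero => simp [V, birkhoffAverage, birkhoffSum]
    | add g h _ _ hg hh =>
      simpa [V, birkhoffAverage_add, integral_add (hint g) (hint h)] using hg.add hh
    | smul c g _ hg =>
      simpa [V, birkhoffAverage_const_smul, integral_const_mul] using hg.const_smul c
  have := hclosed.closure_subset_iff.2 hspan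
  rw [← Submodule.topologicalClosure_coe, span_fourier_closure_eq_top] at this
  exact this trivial

theorem tendsto_real_birkhoffAverage_add {a : AddCircle T} (ha : ¬IsOfFinAddOrder a)
    {g : AddCircle T → ℝ} (hg : Continuous g) (x : AddCircle T) :
    Tendsto (birkhoffAverage ℝ (· + a) g · x) atTop (𝓝 (∫ t, g t ∂haarAddCircle (T := T))) := by
  have h := (Complex.continuous_re.tendsto _).comp
    (tendsto_birkhoffAverage_add ha ⟨fun t => (g t : ℂ), by fun_prop⟩ x)
  have hre (n : ℕ) : (birkhoffAverage ℂ (· + a) (fun t => (g t : ℂ)) n x).re =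
      birkhoffAverage ℝ (· + a) g n x := by
    simpa [Function.comp_def] using
      map_birkhoffAverage ℂ ℝ Complex.reLm (· + a) (fun t => (g t : ℂ)) n x
  simpa [Function.comp_def, hre, integral_complex_ofReal] using h

end AddCircle

section Circle

open AddCircle

instance : Fact (0 < 2 * π) := ⟨two_pi_pos⟩

theorem AddCircle.coe_toCircle_two_pi (θ : ℝ) :
    (toCircle (θ : AddCircle (2 * π)) : ℂ) = Complex.exp (θ * Complex.I) := by
  rw [toCircle_apply_mk, Circle.coe_exp, div_self two_pi_pos.ne', one_mul]

theorem measurable_mul_toCircle (r : ℝ) :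
    Measurable fun θ : AddCircle (2 * π) => (r : ℂ) * toCircle θ := by
  fun_prop

theorem circleUniform_eq_map (r : ℝ) :
    circleUniform r = (haarAddCircle (T := 2 * π)).map fun θ => (r : ℂ) * toCircle θ := by
  have hmk := AddCircle.measurePreserving_mk (2 * π) 0
  rw [zero_add] at hmk
  have hcomp : (fun θ : ℝ => (r : ℂ) * Complex.exp (θ * Complex.I)) =
      (fun θ : AddCircle (2 * π) => (r : ℂ) * toCircle θ) ∘ (↑) := by
    ext θ
    simp [coe_toCircle_two_pi]
  rw [circleUniform, hcomp, ← Measure.map_map (measurable_mul_toCircle r) measurable_quotient_mk'',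
    Measure.map_smul, hmk.map_eq, volume_eq_smul_haarAddCircle, smul_smul,
    ENNReal.inv_mul_cancel (by simp [pi_pos]) ENNReal.ofReal_ne_top, one_smul]

instance (r : ℝ) : IsProbabilityMeasure (circleUniform r) := by
  rw [circleUniform_eq_map]
  exact Measure.isProbabilityMeasure_map (measurable_mul_toCircle r).aemeasurable

theorem integral_circleUniform {E : Type*} [NormedAddCommGroup E] [NormedSpace ℝ E] (r : ℝ)
    {f : ℂ → E} (hf : StronglyMeasurable f) :
    ∫ z, f z ∂circleUniform r = ∫ θ, f (r * toCircle θ) ∂haarAddCircle (T := 2 * π) := by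
  rw [circleUniform_eq_map,
    integral_map (measurable_mul_toCircle r).aemeasurable hf.aestronglyMeasurable]

theorem ae_norm_eq_circleUniform {r : ℝ} (hr : 0 ≤ r) : ∀ᵐ z ∂circleUniform r, ‖z‖ = r := by
  rw [circleUniform_eq_map, ae_map_iff (measurable_mul_toCircle r).aemeasurable
    (measurableSet_eq_fun continuous_norm.measurable measurable_const)]
  exact Eventually.of_forall fun θ => by simp [abs_of_nonneg hr, Circle.norm_coe]

theorem tendsto_average_irrational_rotation {α : ℝ} (hα : Irrational α) {f : ℂ → ℝ}
    (hf : Continuous f) (z : ℂ) :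
    Tendsto (fun N : ℕ => (N : ℝ)⁻¹ *
        ∑ n ∈ Finset.range N, f (Complex.exp (2 * π * α * Complex.I) ^ (n + 1) * z))
      atTop (𝓝 (∫ w, f w ∂circleUniform ‖z‖)) := by
  set a : AddCircle (2 * π) := ((2 * π * α : ℝ) : AddCircle (2 * π))
  have ha : ¬IsOfFinAddOrder a := not_isOfFinAddOrder_iff_forall_rat_ne_div.2 fun q hq =>
    hα ⟨q, by rw [hq]; field_simp⟩
  have key := tendsto_real_birkhoffAverage_add ha
    (g := fun θ => f (‖z‖ * toCircle θ)) (by fun_prop) ((z.arg : AddCircle (2 * π)) + a)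
  rw [integral_circleUniform _ hf.stronglyMeasurable]
  refine key.congr fun N => ?_
  simp only [birkhoffAverage, birkhoffSum, smul_eq_mul, add_right_iterate_apply]
  congr 1
  refine Finset.sum_congr rfl fun n _ => congrArg f ?_
  rw [add_assoc, ← succ_nsmul', toCircle_add, toCircle_nsmul, Circle.coe_mul, Circle.coe_pow,
    coe_toCircle_two_pi, coe_toCircle_two_pi]
  conv_rhs => rw [← Complex.norm_mul_exp_arg_mul_I z]
  push_cast
  ring

end Circle

section SumMeasure

variable {ι α E : Type*} [Countable ι] [MeasurableSpace α] [NormedAddCommGroup E]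
  {μ : ι → Measure α} {f : α → E} (S : Finset ι)

theorem integrable_sum_measure_of_ae_eq_zero (hf : ∀ i, Integrable f (μ i))
    (h0 : ∀ i ∉ S, f =ᵐ[μ i] 0) : Integrable f (Measure.sum μ) :=
  integrable_sum_measure hf <| summable_of_ne_finset_zero fun i hi =>
    integral_eq_zero_of_ae <| (h0 i hi).mono fun x hx => by simp [hx]

theorem integral_sum_measure_of_ae_eq_zero [NormedSpace ℝ E] (hf : ∀ i, Integrable f (μ i))
    (h0 : ∀ i ∉ S, f =ᵐ[μ i] 0) : ∫ x, f x ∂Measure.sum μ = ∑ i ∈ S, ∫ x, f x ∂μ i := by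
  rw [integral_sum_measure (integrable_sum_measure_of_ae_eq_zero S hf h0),
    tsum_eq_sum fun i hi => integral_eq_zero_of_ae (h0 i hi)]

end SumMeasure

theorem MeasureTheory.Measure.sum_comp_eq_sum_encard_smul {ι κ α : Type*} [MeasurableSpace α]
    (ν : κ → Measure α) (g : ι → κ) :
    Measure.sum (fun i => ν (g i)) = Measure.sum fun k => ((g ⁻¹' {k}).encard : ℝ≥0∞) • ν k := by
  ext s hs
  simp only [Measure.sum_apply _ hs, Measure.smul_apply, smul_eq_mul]
  rw [← ENNReal.tsum_fiberwise _ g]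
  refine tsum_congr fun k => ?_
  rw [← ENNReal.tsum_set_const]
  exact tsum_congr fun i => by rw [i.2]

section Lattice

def latticePoint (p : ℤ × ℤ) : ℂ := p.1 + p.2 * Complex.I

theorem sq_norm_latticePoint (p : ℤ × ℤ) :
    ‖latticePoint p‖ ^ 2 = (p.1 : ℝ) ^ 2 + (p.2 : ℝ) ^ 2 := by
  rw [Complex.sq_norm, latticePoint, ← Complex.ofReal_intCast, ← Complex.ofReal_intCast,
    Complex.normSq_add_mul_I]

theorem finite_setOf_norm_latticePoint_lt (R : ℝ) :
    {p : ℤ × ℤ | ‖latticePoint p‖ < R}.Finite := by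
  refine (Set.finite_Icc (-⌈R⌉, -⌈R⌉) (⌈R⌉, ⌈R⌉)).subset fun p hp => ?_
  have h1 : |(p.1 : ℝ)| ≤ ⌈R⌉ := by
    simpa [latticePoint] using ((Complex.abs_re_le_norm _).trans hp.le).trans (Int.le_ceil R)
  have h2 : |(p.2 : ℝ)| ≤ ⌈R⌉ := by
    simpa [latticePoint] using ((Complex.abs_im_le_norm _).trans hp.le).trans (Int.le_ceil R)
  rw [abs_le] at h1 h2
  exact ⟨⟨by exact_mod_cast h1.1, by exact_mod_cast h2.1⟩, by exact_mod_cast h1.2,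
    by exact_mod_cast h2.2⟩

noncomputable def latticeBall (R : ℝ) : Finset (ℤ × ℤ) :=
  (finite_setOf_norm_latticePoint_lt R).toFinset

theorem mem_latticeBall {R : ℝ} {p : ℤ × ℤ} : p ∈ latticeBall R ↔ ‖latticePoint p‖ < R :=
  Set.Finite.mem_toFinset _

theorem norm_latticePoint_mem_shellRadii (p : ℤ × ℤ) : ‖latticePoint p‖ ∈ shellRadii :=
  ⟨norm_nonneg _, p.1, p.2, sq_norm_latticePoint p⟩

theorem sum_shellCount_smul_circleUniform :
    Measure.sum (fun r : shellRadii => (shellCount r : ℝ≥0∞) • circleUniform r) =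
      Measure.sum fun p => circleUniform ‖latticePoint p‖ := by
  rw [Measure.sum_comp_eq_sum_encard_smul (fun r : shellRadii => circleUniform r)
    fun p => ⟨_, norm_latticePoint_mem_shellRadii p⟩]
  congr with r : 2
  have hfiber : (fun p => (⟨_, norm_latticePoint_mem_shellRadii p⟩ : shellRadii)) ⁻¹' {r} =
      {p | ‖latticePoint p‖ = r} := by
    ext p
    simp [Subtype.ext_iff]
  have hfin : {p | ‖latticePoint p‖ = r}.Finite :=
    (finite_setOf_norm_latticePoint_lt (r + 1)).subset fun p (hp : ‖latticePoint p‖ = r) =>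
      show ‖latticePoint p‖ < r + 1 by linarith
  rw [hfiber, ← hfin.cast_ncard_eq]
  rfl

end Lattice

section Integrals

variable {f : ℂ → ℝ} {R : ℝ}

theorem integral_rotLatticeComb (hR : ∀ z, R ≤ ‖z‖ → f z = 0) {u : ℂ} (hu : ‖u‖ = 1) :
    Integrable f (rotLatticeComb u) ∧
      ∫ z, f z ∂rotLatticeComb u = ∑ p ∈ latticeBall R, f (u * latticePoint p) := by
  have hint (p : ℤ × ℤ) : Integrable f (Measure.dirac (u * latticePoint p)) :=
    integrable_dirac enorm_lt_top
  have h0 (p) (hp : p ∉ latticeBall R) : f =ᵐ[Measure.dirac (u * latticePoint p)] 0 := by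
    rw [Filter.EventuallyEq, ae_dirac_eq, eventually_pure]
    exact hR _ (by simpa [hu, mem_latticeBall] using hp)
  exact ⟨integrable_sum_measure_of_ae_eq_zero _ hint h0,
    (integral_sum_measure_of_ae_eq_zero _ hint h0).trans (by simp_rw [integral_dirac])⟩

theorem integral_average_rotLatticeComb (hR : ∀ z, R ≤ ‖z‖ → f z = 0) {u : ℕ → ℂ}
    (hu : ∀ n, ‖u n‖ = 1) (N : ℕ) :
    ∫ z, f z ∂((N : ℝ≥0∞)⁻¹ • ∑ n ∈ Finset.range N, rotLatticeComb (u n)) =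
      ∑ p ∈ latticeBall R, (N : ℝ)⁻¹ * ∑ n ∈ Finset.range N, f (u n * latticePoint p) := by
  rw [integral_smul_measure,
    integral_finsetSum_measure fun n _ => (integral_rotLatticeComb hR (hu n)).1,
    Finset.sum_congr rfl fun n _ => (integral_rotLatticeComb hR (hu n)).2, Finset.sum_comm,
    ← Finset.mul_sum]
  simp

theorem integral_sum_circleUniform (hf : Continuous f) (hsupp : HasCompactSupport f)
    (hR : ∀ z, R ≤ ‖z‖ → f z = 0) :
    ∫ z, f z ∂Measure.sum (fun p => circleUniform ‖latticePoint p‖) =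
      ∑ p ∈ latticeBall R, ∫ z, f z ∂circleUniform ‖latticePoint p‖ := by
  refine integral_sum_measure_of_ae_eq_zero _ (fun p => hf.integrable_of_hasCompactSupport hsupp)
    fun p hp => (ae_norm_eq_circleUniform (norm_nonneg _)).mono fun z hz => hR z ?_
  simpa [hz, mem_latticeBall] using hp

end Integrals

theorem rotated_lattice_combs_converge_vaguely_general (α : ℝ) (hα : Irrational α)
    (f : ℂ → ℝ) (hf : Continuous f) (hsupp : HasCompactSupport f) :
    Tendsto (fun N : ℕ =>
        ∫ z, f z ∂((N : ℝ≥0∞)⁻¹ • ∑ n ∈ Finset.range N,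
          rotLatticeComb (Complex.exp (2 * π * α * Complex.I) ^ (n + 1))))
      atTop
      (nhds (∫ z, f z ∂(Measure.sum fun r : shellRadii =>
        (shellCount r : ℝ≥0∞) • circleUniform r))) := by
  obtain ⟨R, -, hR⟩ := hsupp.exists_pos_le_norm
  have hu (n : ℕ) : ‖Complex.exp (2 * π * α * Complex.I) ^ (n + 1)‖ = 1 := by
    rw [norm_pow, ← Complex.ofReal_ofNat, ← Complex.ofReal_mul, ← Complex.ofReal_mul,
      Complex.norm_exp_ofReal_mul_I, one_pow]
  rw [sum_shellCount_smul_circleUniform, integral_sum_circleUniform hf hsupp hR]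
  simp_rw [integral_average_rotLatticeComb hR hu]
  exact tendsto_finsetSum _ fun p _ => tendsto_average_irrational_rotation hα hf (latticePoint p)

/-- For irrational `α ∈ (0,1)` and `R` the rotation through `2πα`, the measures
`ω_N = (1/N) ∑_{n=1}^N δ_{Rⁿℤ²}` converge vaguely to
`ω = ∑_{r ∈ D} η(r) μ_r`, where `D` is the set of shell radii of `ℤ²`, `η(r)`
the corresponding shelling numbers, and `μ_r` the uniform probability measure on
the circle of radius `r` (with `μ_0 = δ_0`). -/
theorem rotated_lattice_combs_converge_vaguely (α : ℝ) (hα : Irrational α)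
    (h0 : 0 < α) (h1 : α < 1)
    (f : ℂ → ℝ) (hf : Continuous f) (hsupp : HasCompactSupport f) :
    Tendsto (fun N : ℕ =>
        ∫ z, f z ∂((N : ℝ≥0∞)⁻¹ • ∑ n ∈ Finset.range N,
          rotLatticeComb (Complex.exp (2 * π * α * Complex.I) ^ (n + 1))))
      atTop
      (nhds (∫ z, f z ∂(Measure.sum fun r : shellRadii =>
        (shellCount r : ℝ≥0∞) • circleUniform r))) :=
  rotated_lattice_combs_converge_vaguely_general α hα f hf hsupp
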